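/- Let $D\subset\mathbb{R}^2$ be a bounded open set, $\Omega=D\times(0,1)$, and let $p\in[2,4]$. For every $w\in C^1(\overline{\Omega})$: $\int_D|w(x,y,1)|^p\,\mathrm{d}(x,y)\ \le\ p\,\Big(\int_\Omega|w|^{2(p-1)}\,\mathrm{d}(x,y,\eta)\Big)^{1/2}\,\|w\|_{W_2^1(\Omega)}$, where $\|w\|_{W_2^1(\Omega)}=\big(\int_\Omega w^2+\int_\Omega|\nabla w|^2\big)^{1/2}$ with $\nabla w$ the full gradient in $\mathbb{R}^3$. -/

import Mathlib

open Set MeasureTheory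

/-- Partial derivative in the first variable of a function on `ℝ × ℝ × ℝ`. -/
noncomputable def dX (f : ℝ × ℝ × ℝ → ℝ) (z : ℝ × ℝ × ℝ) : ℝ :=
  deriv (fun t => f (t, z.2.1, z.2.2)) z.1

/-- Partial derivative in the second variable of a function on `ℝ × ℝ × ℝ`. -/
noncomputable def dY (f : ℝ × ℝ × ℝ → ℝ) (z : ℝ × ℝ × ℝ) : ℝ :=
  deriv (fun t => f (z.1, t, z.2.2)) z.2.1

/-- Partial derivative in the third (vertical) variable of a function on `ℝ × ℝ × ℝ`. -/
noncomputable def dZ (f : ℝ × ℝ × ℝ → ℝ) (z : ℝ × ℝ × ℝ) : ℝ :=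
  deriv (fun t => f (z.1, z.2.1, t)) z.2.2

/-- Partial derivative in the first variable of a function on `ℝ × ℝ`. -/
noncomputable def d1 (v : ℝ × ℝ → ℝ) (q : ℝ × ℝ) : ℝ := deriv (fun t => v (t, q.2)) q.1

/-- Partial derivative in the second variable of a function on `ℝ × ℝ`. -/
noncomputable def d2 (v : ℝ × ℝ → ℝ) (q : ℝ × ℝ) : ℝ := deriv (fun t => v (q.1, t)) q.2

/-- `|∇v|²` for a function on `ℝ × ℝ`. -/
noncomputable def gradSq (v : ℝ × ℝ → ℝ) (q : ℝ × ℝ) : ℝ := d1 v q ^ 2 + d2 v q ^ 2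

/-- The Laplacian `Δv` of a function on `ℝ × ℝ`. -/
noncomputable def lap (v : ℝ × ℝ → ℝ) (q : ℝ × ℝ) : ℝ := d1 (d1 v) q + d2 (d2 v) q

/-- The transformed elliptic operator `𝓛_v` acting on functions on `Ω = D × (0,1)`. -/
noncomputable def Lop (ε : ℝ) (v : ℝ × ℝ → ℝ) (w : ℝ × ℝ × ℝ → ℝ) (z : ℝ × ℝ × ℝ) : ℝ :=
  ε ^ 2 * dX (dX w) z + ε ^ 2 * dY (dY w) z
    - 2 * ε ^ 2 * z.2.2 * (d1 v (z.1, z.2.1) / (1 + v (z.1, z.2.1))) * dX (dZ w) z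
    - 2 * ε ^ 2 * z.2.2 * (d2 v (z.1, z.2.1) / (1 + v (z.1, z.2.1))) * dY (dZ w) z
    + ((1 + ε ^ 2 * z.2.2 ^ 2 * gradSq v (z.1, z.2.1)) / (1 + v (z.1, z.2.1)) ^ 2)
        * dZ (dZ w) z
    + ε ^ 2 * z.2.2 * (2 * gradSq v (z.1, z.2.1) / (1 + v (z.1, z.2.1)) ^ 2
        - lap v (z.1, z.2.1) / (1 + v (z.1, z.2.1))) * dZ w z

/-- The open region `Ω(v)` between the ground plate at `z = -1` and the deflected plate. -/
def OmegaV (D : Set (ℝ × ℝ)) (v : ℝ × ℝ → ℝ) : Set (ℝ × ℝ × ℝ) :=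
  {z : ℝ × ℝ × ℝ | (z.1, z.2.1) ∈ D ∧ -1 < z.2.2 ∧ z.2.2 < v (z.1, z.2.1)}

/-- The cylinder `Ω = D × (0,1)`. -/
def cyl (D : Set (ℝ × ℝ)) : Set (ℝ × ℝ × ℝ) :=
  {z : ℝ × ℝ × ℝ | (z.1, z.2.1) ∈ D ∧ z.2.2 ∈ Ioo (0 : ℝ) 1}

/-! ### Auxiliary material -/

noncomputable def PhiF (p x : ℝ) : ℝ := (x ^ 2) ^ (p / 2)
noncomputable def SFd (p x : ℝ) : ℝ := p * (x ^ 2) ^ (p / 2 - 1) * x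

lemma phiF_eq_abs (p x : ℝ) : PhiF p x = |x| ^ p := by
  rw [PhiF, ← sq_abs, ← Real.rpow_natCast |x| 2, ← Real.rpow_mul (abs_nonneg x)]
  congr 1
  push_cast
  ring

lemma sq_rpow_eq_abs (p x : ℝ) : (x ^ 2) ^ (p / 2 - 1) = |x| ^ (p - 2) := by
  rw [← sq_abs, ← Real.rpow_natCast |x| 2, ← Real.rpow_mul (abs_nonneg x)]
  congr 1
  push_cast
  ring

lemma abs_rpow_succ {p : ℝ} (hp : p ≠ 1) (x : ℝ) : |x| ^ (p - 2) * |x| = |x| ^ (p - 1) := by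
  rcases eq_or_ne x 0 with rfl | hx
  · simp [Real.zero_rpow (sub_ne_zero.2 hp)]
  · rw [show p - 1 = (p - 2) + 1 by ring, Real.rpow_add_one (abs_ne_zero.2 hx)]

lemma sF_abs {p : ℝ} (hp : 2 ≤ p) (x : ℝ) : |SFd p x| = p * |x| ^ (p - 1) := by
  have h0 : 0 ≤ (x ^ 2) ^ (p / 2 - 1) := Real.rpow_nonneg (sq_nonneg x) _
  rw [SFd, abs_mul, abs_mul, abs_of_nonneg (by linarith : (0:ℝ) ≤ p), abs_of_nonneg h0,
    sq_rpow_eq_abs, mul_assoc, abs_rpow_succ (by linarith) x]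

lemma hasDerivAt_phiF {p : ℝ} (hp : 2 ≤ p) (x : ℝ) : HasDerivAt (PhiF p) (SFd p x) x := by
  have h := (hasDerivAt_pow 2 x).rpow_const (p := p / 2) (Or.inr (by linarith))
  convert h using 1
  · rfl
  rw [SFd]
  push_cast
  ring

lemma ptkey {p : ℝ} (hp : 2 ≤ p) (x d a b : ℝ) :
    a * PhiF p x + b * SFd p x * d ≤ |x| ^ (p - 1) * |a * x + p * b * d| := by
  rcases eq_or_ne x 0 with rfl | hx
  · have h1 : PhiF p 0 = 0 := by
      rw [PhiF]
      simp only [ne_eq, OfNat.ofNat_ne_zero, not_false_eq_true, zero_pow]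
      exact Real.zero_rpow (by positivity)
    have h2 : SFd p 0 = 0 := by simp [SFd]
    rw [h1, h2]
    simp only [mul_zero, zero_mul, add_zero, zero_add, abs_zero]
    positivity
  · have hxa : (0:ℝ) < |x| := abs_pos.2 hx
    have habs2 : |x| ^ (2:ℝ) = x ^ 2 := by
      rw [show (2:ℝ) = ((2:ℕ):ℝ) by norm_num, Real.rpow_natCast, sq_abs]
    have e1 : |x| ^ p = |x| ^ (p - 2) * x ^ 2 := by
      rw [← habs2, ← Real.rpow_add hxa]
      congr 1
      ring
    have e2 : SFd p x = p * (|x| ^ (p - 2) * x) := by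
      rw [SFd, sq_rpow_eq_abs]; ring
    calc a * PhiF p x + b * SFd p x * d
        = |x| ^ (p - 2) * (x * (a * x + p * b * d)) := by
          rw [phiF_eq_abs, e1, e2]; ring
      _ ≤ |x| ^ (p - 2) * |x * (a * x + p * b * d)| :=
          mul_le_mul_of_nonneg_left (le_abs_self _) (Real.rpow_nonneg (abs_nonneg x) _)
      _ = (|x| ^ (p - 2) * |x|) * |a * x + p * b * d| := by rw [abs_mul]; ring
      _ = |x| ^ (p - 1) * |a * x + p * b * d| := by rw [abs_rpow_succ (by linarith) x]

lemma ptkey2 {p e a dv xv yv : ℝ} (hp2 : 2 ≤ p) (hη0 : 0 < e) (hη1 : e < 1) :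
    ((2 - 2*e) * a + p * (2*e - e^2) * dv)^2
      - p * (((2 - 2*e)*(2 - 2*e) + (2*e - e^2) * (-2)) * a^2
        + ((2*e - e^2) * (2 - 2*e)) * (2 * a ^ 1 * dv))
      ≤ p^2 * (a^2 + (xv^2 + yv^2 + dv^2)) := by
  have hq1 : 2*e - e^2 ≤ 1 := by nlinarith
  have hq0 : 0 ≤ 2*e - e^2 := by nlinarith
  have expand : ((2 - 2*e) * a + p * (2*e - e^2) * dv)^2
      - p * (((2 - 2*e)*(2 - 2*e) + (2*e - e^2) * (-2)) * a^2
        + ((2*e - e^2) * (2 - 2*e)) * (2 * a ^ 1 * dv))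
      = (1-p)*(2 - 2*e)^2*a^2 + 2*p*(2*e - e^2)*a^2 + p^2*(2*e - e^2)^2*dv^2 := by ring
  rw [expand]
  have c1 : (1-p)*(2 - 2*e)^2*a^2 ≤ 0 :=
    mul_nonpos_of_nonpos_of_nonneg
      (mul_nonpos_of_nonpos_of_nonneg (by linarith) (sq_nonneg _)) (sq_nonneg _)
  have c2 : 2*p*(2*e - e^2)*a^2 ≤ p^2*a^2 := by
    have hcoef : 2*p*(2*e - e^2) ≤ p^2 := by nlinarith
    exact mul_le_mul_of_nonneg_right hcoef (sq_nonneg _)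
  have c3 : p^2*(2*e - e^2)^2*dv^2 ≤ p^2*dv^2 := by
    have hq2 : (2*e - e^2)^2 ≤ 1 := by nlinarith
    nlinarith [sq_nonneg dv, sq_nonneg p, mul_nonneg (sq_nonneg p) (sq_nonneg dv)]
  have c4 : 0 ≤ p^2*xv^2 := by positivity
  have c5 : 0 ≤ p^2*yv^2 := by positivity
  nlinarith [c1, c2, c3, c4, c5]

lemma slice_ftc {f g : ℝ → ℝ} (hf : ContinuousOn f (Icc 0 1))
    (hd : ∀ t ∈ Ioo (0:ℝ) 1, HasDerivAt f (g t) t) (hg : IntegrableOn g (Ioo 0 1)) :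
    ∫ t in Ioo (0:ℝ) 1, g t = f 1 - f 0 := by
  have h := intervalIntegral.integral_eq_sub_of_hasDeriv_right_of_le zero_le_one hf
    (fun t ht => (hd t ht).hasDerivWithinAt) ?_
  · rw [intervalIntegral.integral_of_le zero_le_one, integral_Ioc_eq_integral_Ioo] at h
    exact h
  · rw [intervalIntegrable_iff_integrableOn_Ioc_of_le zero_le_one]
    exact (integrableOn_Ioc_iff_integrableOn_Ioo (by simp)).2 hg

lemma fderiv_bound {w : ℝ × ℝ × ℝ → ℝ} {s : Set (ℝ × ℝ × ℝ)} (hs : IsOpen s)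
    (hK : IsCompact (closure s)) (hw : ContDiffOn ℝ 1 w (closure s)) :
    ∃ C : ℝ, ∀ z ∈ s, ‖fderiv ℝ w z‖ ≤ C := by
  have key : ∀ x ∈ closure s, ∃ (U : Set (ℝ × ℝ × ℝ)) (c : ℝ), U ∈ nhds x ∧
      ∀ y ∈ s ∩ U, ‖fderiv ℝ w y‖ ≤ c := by
    intro x hx
    have hx1 : ContDiffWithinAt ℝ (0 + 1) w (closure s) x := by
      rw [zero_add]; exact hw x hx
    rcases (contDiffWithinAt_succ_iff_hasFDerivWithinAt (by simp)).1 hx1 with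
      ⟨u, hu, -, f', hf'd, hf'c⟩
    rw [insert_eq_of_mem hx] at hu
    rcases mem_nhdsWithin.1 hu with ⟨v, hvo, hxv, hvs⟩
    have hcont : ContinuousWithinAt f' u x := hf'c.continuousWithinAt
    have hball : f' ⁻¹' Metric.closedBall (f' x) 1 ∈ nhdsWithin x u :=
      hcont (Metric.closedBall_mem_nhds _ one_pos)
    rcases mem_nhdsWithin.1 hball with ⟨v', hv'o, hxv', hv's⟩
    refine ⟨v ∩ v', ‖f' x‖ + 1,
      Filter.inter_mem (hvo.mem_nhds hxv) (hv'o.mem_nhds hxv'), ?_⟩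
    rintro y ⟨hys, hyv, hyv'⟩
    have hyu : y ∈ u := hvs ⟨hyv, subset_closure hys⟩
    have hunn : u ∈ nhds y := by
      have h1 : s ∩ v ∈ nhds y := (hs.inter hvo).mem_nhds ⟨hys, hyv⟩
      exact Filter.mem_of_superset h1 (fun z hz => hvs ⟨hz.2, subset_closure hz.1⟩)
    have hder : HasFDerivAt w (f' y) y := (hf'd y hyu).hasFDerivAt hunn
    rw [hder.fderiv]
    have hmem : f' y ∈ Metric.closedBall (f' x) 1 := hv's ⟨hyv', hyu⟩
    have hd1 : ‖f' y - f' x‖ ≤ 1 := by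
      rw [← dist_eq_norm]; exact Metric.mem_closedBall.1 hmem
    calc ‖f' y‖ = ‖f' x + (f' y - f' x)‖ := by rw [add_sub_cancel]
      _ ≤ ‖f' x‖ + ‖f' y - f' x‖ := norm_add_le _ _
      _ ≤ ‖f' x‖ + 1 := by linarith
  choose! U c hU hc using key
  rcases hK.elim_nhds_subcover' (fun x _ => U x) (fun x hx => hU x hx) with ⟨t, ht⟩
  set ffn : ↑(closure s) → NNReal := fun x => Real.toNNReal (c ↑x) with hffn
  refine ⟨((t.sup ffn : NNReal) : ℝ), ?_⟩
  intro z hz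
  rcases mem_iUnion₂.1 (ht (subset_closure hz)) with ⟨x, hxt, hzU⟩
  have h1 : ‖fderiv ℝ w z‖ ≤ c x := hc x x.2 z ⟨hz, hzU⟩
  have h2 : c ↑x ≤ ((ffn x : NNReal) : ℝ) := Real.le_coe_toNNReal _
  have h3 : ffn x ≤ t.sup ffn := Finset.le_sup hxt
  have h4 : ((ffn x : NNReal) : ℝ) ≤ ((t.sup ffn : NNReal) : ℝ) := by exact_mod_cast h3
  linarith

/-- Intermediate trace estimate: for all `w ∈ C¹(Ω̄)` and `p ∈ [2,4]`,
`∫_D |w(x,y,1)|^p ≤ p (∫_Ω |w|^{2(p-1)})^{1/2} ‖w‖_{W¹₂(Ω)}`. -/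
theorem stmt11 (D : Set (ℝ × ℝ)) (hD : IsOpen D) (hDb : Bornology.IsBounded D)
    (p : ℝ) (hp : p ∈ Icc (2 : ℝ) 4)
    (w : ℝ × ℝ × ℝ → ℝ) (hw : ContDiffOn ℝ 1 w (closure (cyl D))) :
    (∫ q in D, |w (q.1, q.2, 1)| ^ p)
      ≤ p * (∫ z in cyl D, |w z| ^ (2 * (p - 1))) ^ ((1 : ℝ) / 2)
          * Real.sqrt ((∫ z in cyl D, (w z) ^ 2)
              + ∫ z in cyl D, ((dX w z) ^ 2 + (dY w z) ^ 2 + (dZ w z) ^ 2)) := by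
  obtain ⟨hp2, hp4⟩ := hp
  have hp0 : (0:ℝ) < p := by linarith
  -- topology of the cylinder
  have hMo : IsOpen (cyl D) := by
    have he : cyl D = ((fun z : ℝ × ℝ × ℝ => (z.1, z.2.1)) ⁻¹' D) ∩
        ((fun z : ℝ × ℝ × ℝ => z.2.2) ⁻¹' Ioo 0 1) := rfl
    rw [he]
    exact (hD.preimage (by fun_prop)).inter (isOpen_Ioo.preimage (by fun_prop))
  have hMm : MeasurableSet (cyl D) := hMo.measurableSet
  obtain ⟨R, hR⟩ := hDb.subset_closedBall 0
  have hMb : Bornology.IsBounded (cyl D) := by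
    apply Bornology.IsBounded.subset (Metric.isBounded_closedBall
      (x := (0:ℝ×ℝ×ℝ)) (r := max R 1))
    intro z hz
    have h1 : (z.1, z.2.1) ∈ Metric.closedBall (0:ℝ×ℝ) R := hR hz.1
    have h2 : z.2.2 ∈ Ioo (0:ℝ) 1 := hz.2
    simp only [Metric.mem_closedBall, dist_zero_right, Prod.norm_def, Real.norm_eq_abs] at h1 ⊢
    have h3 : |z.2.2| ≤ 1 := abs_le.2 ⟨by linarith [h2.1], le_of_lt h2.2⟩
    rcases max_le_iff.1 h1 with ⟨ha, hb⟩
    exact max_le (ha.trans (le_max_left _ _))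
      (max_le (hb.trans (le_max_left _ _)) (h3.trans (le_max_right _ _)))
  have hKc : IsCompact (closure (cyl D)) :=
    Metric.isCompact_of_isClosed_isBounded isClosed_closure hMb.closure
  have hfin : volume (cyl D) ≠ ⊤ :=
    ne_of_lt (lt_of_le_of_lt (measure_mono subset_closure) hKc.measure_lt_top)
  -- membership facts
  have hmemM : ∀ q : ℝ × ℝ, q ∈ D → ∀ t ∈ Ioo (0:ℝ) 1,
      ((q.1, q.2, t) : ℝ×ℝ×ℝ) ∈ cyl D := fun q hq t ht => ⟨by simpa using hq, ht⟩
  have hsl : ∀ q : ℝ × ℝ, q ∈ D → ∀ t ∈ Icc (0:ℝ) 1,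
      ((q.1, q.2, t) : ℝ×ℝ×ℝ) ∈ closure (cyl D) := by
    intro q hq t ht
    have hcont : Continuous (fun s : ℝ => ((q.1, q.2, s) : ℝ×ℝ×ℝ)) := by fun_prop
    have hmap : (fun s : ℝ => ((q.1, q.2, s) : ℝ×ℝ×ℝ)) '' Ioo 0 1 ⊆ cyl D := by
      rintro z ⟨s, hs, rfl⟩
      exact hmemM q hq s hs
    have h1 : ((q.1, q.2, t) : ℝ×ℝ×ℝ)
        ∈ (fun s : ℝ => ((q.1, q.2, s):ℝ×ℝ×ℝ)) '' closure (Ioo 0 1) :=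
      ⟨t, by rwa [closure_Ioo zero_ne_one], rfl⟩
    exact closure_mono hmap ((image_closure_subset_closure_image hcont) h1)
  have hwc : ContinuousOn w (closure (cyl D)) := hw.continuousOn
  have hwM : ContinuousOn w (cyl D) := hwc.mono subset_closure
  -- differentiability at interior points
  have hdiff : ∀ z ∈ cyl D, DifferentiableAt ℝ w z := by
    intro z hz
    have h1 : closure (cyl D) ∈ nhds z :=
      Filter.mem_of_superset (hMo.mem_nhds hz) subset_closure
    exact ((hw z (subset_closure hz)).contDiffAt h1).differentiableAt (by norm_num)
  -- partial derivatives via the full derivative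
  have hdXeqA : ∀ z ∈ cyl D, HasDerivAt (fun t => w (t, z.2.1, z.2.2))
      (fderiv ℝ w z ((1:ℝ), (0:ℝ), (0:ℝ))) z.1 := by
    intro z hz
    have hcurve : HasDerivAt (fun t : ℝ => ((t, z.2.1, z.2.2) : ℝ×ℝ×ℝ))
        ((1:ℝ), (0:ℝ), (0:ℝ)) z.1 := by
      have h := (hasDerivAt_id z.1).prodMk (hasDerivAt_const z.1 ((z.2.1, z.2.2) : ℝ×ℝ))
      exact h
    simpa [Function.comp_def] using (hdiff z hz).hasFDerivAt.comp_hasDerivAt z.1 hcurve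
  have hdYeqA : ∀ z ∈ cyl D, HasDerivAt (fun t => w (z.1, t, z.2.2))
      (fderiv ℝ w z ((0:ℝ), (1:ℝ), (0:ℝ))) z.2.1 := by
    intro z hz
    have hcurve : HasDerivAt (fun t : ℝ => ((z.1, t, z.2.2) : ℝ×ℝ×ℝ))
        ((0:ℝ), (1:ℝ), (0:ℝ)) z.2.1 := by
      have h := (hasDerivAt_const z.2.1 z.1).prodMk
        ((hasDerivAt_id z.2.1).prodMk (hasDerivAt_const z.2.1 z.2.2))
      exact h
    simpa [Function.comp_def] using (hdiff z hz).hasFDerivAt.comp_hasDerivAt z.2.1 hcurve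
  have hdZeqA : ∀ z ∈ cyl D, HasDerivAt (fun t => w (z.1, z.2.1, t))
      (fderiv ℝ w z ((0:ℝ), (0:ℝ), (1:ℝ))) z.2.2 := by
    intro z hz
    have hcurve : HasDerivAt (fun t : ℝ => ((z.1, z.2.1, t) : ℝ×ℝ×ℝ))
        ((0:ℝ), (0:ℝ), (1:ℝ)) z.2.2 := by
      have h := (hasDerivAt_const z.2.2 z.1).prodMk
        ((hasDerivAt_const z.2.2 z.2.1).prodMk (hasDerivAt_id z.2.2))
      exact h
    simpa [Function.comp_def] using (hdiff z hz).hasFDerivAt.comp_hasDerivAt z.2.2 hcurve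
  have hdXeq : ∀ z ∈ cyl D, dX w z = fderiv ℝ w z ((1:ℝ), (0:ℝ), (0:ℝ)) :=
    fun z hz => (hdXeqA z hz).deriv
  have hdYeq : ∀ z ∈ cyl D, dY w z = fderiv ℝ w z ((0:ℝ), (1:ℝ), (0:ℝ)) :=
    fun z hz => (hdYeqA z hz).deriv
  have hdZeq : ∀ z ∈ cyl D, dZ w z = fderiv ℝ w z ((0:ℝ), (0:ℝ), (1:ℝ)) :=
    fun z hz => (hdZeqA z hz).deriv
  have hZder : ∀ z ∈ cyl D, HasDerivAt (fun t => w (z.1, z.2.1, t)) (dZ w z) z.2.2 := by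
    intro z hz
    rw [hdZeq z hz]
    exact hdZeqA z hz
  -- continuity of the partial derivatives
  have hf'c : ContinuousOn (fderiv ℝ w) (cyl D) :=
    (hw.mono subset_closure).continuousOn_fderiv_of_isOpen hMo le_rfl
  have hdXc : ContinuousOn (dX w) (cyl D) :=
    (hf'c.clm_apply continuousOn_const).congr (fun z hz => hdXeq z hz)
  have hdYc : ContinuousOn (dY w) (cyl D) :=
    (hf'c.clm_apply continuousOn_const).congr (fun z hz => hdYeq z hz)
  have hdZc : ContinuousOn (dZ w) (cyl D) :=
    (hf'c.clm_apply continuousOn_const).congr (fun z hz => hdZeq z hz)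
  -- uniform bounds
  obtain ⟨C₀, hC₀⟩ := fderiv_bound hMo hKc hw
  obtain ⟨C₁, hC₁⟩ := hKc.exists_bound_of_continuousOn hwc
  set C : ℝ := max (max C₀ C₁) 1 with hCdef
  have hC1 : (1:ℝ) ≤ C := le_max_right _ _
  have hC0 : (0:ℝ) ≤ C := by linarith
  have hCw : ∀ z ∈ cyl D, |w z| ≤ C := by
    intro z hz
    have h1 : |w z| ≤ C₁ := by
      simpa [Real.norm_eq_abs] using hC₁ z (subset_closure hz)
    exact h1.trans ((le_max_right C₀ C₁).trans (le_max_left _ _))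
  have hCder : ∀ z ∈ cyl D, ∀ v : ℝ×ℝ×ℝ, ‖v‖ ≤ 1 → |fderiv ℝ w z v| ≤ C := by
    intro z hz v hv
    have hb : ‖fderiv ℝ w z‖ ≤ C :=
      (hC₀ z hz).trans ((le_max_left C₀ C₁).trans (le_max_left _ _))
    calc |fderiv ℝ w z v| = ‖fderiv ℝ w z v‖ := (Real.norm_eq_abs _).symm
      _ ≤ ‖fderiv ℝ w z‖ * ‖v‖ := (fderiv ℝ w z).le_opNorm v
      _ ≤ C * 1 := mul_le_mul hb hv (norm_nonneg v) hC0
      _ = C := mul_one C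
  have hCX : ∀ z ∈ cyl D, |dX w z| ≤ C := by
    intro z hz
    rw [hdXeq z hz]
    exact hCder z hz _ (by simp [Prod.norm_def])
  have hCY : ∀ z ∈ cyl D, |dY w z| ≤ C := by
    intro z hz
    rw [hdYeq z hz]
    exact hCder z hz _ (by simp [Prod.norm_def])
  have hCZ : ∀ z ∈ cyl D, |dZ w z| ≤ C := by
    intro z hz
    rw [hdZeq z hz]
    exact hCder z hz _ (by simp [Prod.norm_def])
  -- the three auxiliary functions
  set F : ℝ×ℝ×ℝ → ℝ := fun z =>
    (2 - 2*z.2.2) * PhiF p (w z) + (2*z.2.2 - z.2.2^2) * (SFd p (w z) * dZ w z) with hFdef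
  set G : ℝ×ℝ×ℝ → ℝ := fun z =>
    (2 - 2*z.2.2) * w z + p * (2*z.2.2 - z.2.2^2) * dZ w z with hGdef
  set H : ℝ×ℝ×ℝ → ℝ := fun z =>
    ((2 - 2*z.2.2)*(2 - 2*z.2.2) + (2*z.2.2 - z.2.2^2) * (-2)) * (w z)^2
      + ((2*z.2.2 - z.2.2^2) * (2 - 2*z.2.2)) * (2 * w z ^ 1 * dZ w z) with hHdef
  -- continuity
  have hPhiCont : Continuous (PhiF p) := by
    unfold PhiF
    exact (continuous_pow 2).rpow_const (fun x => Or.inr (by linarith))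
  have hSCont : Continuous (SFd p) := by
    unfold SFd
    exact (continuous_const.mul
      ((continuous_pow 2).rpow_const (fun x => Or.inr (by linarith)))).mul continuous_id
  have hFc : ContinuousOn F (cyl D) := by
    rw [hFdef]
    exact ((Continuous.continuousOn (by fun_prop)).mul (hPhiCont.comp_continuousOn hwM)).add
      ((Continuous.continuousOn (by fun_prop)).mul
        ((hSCont.comp_continuousOn hwM).mul hdZc))
  have hGc : ContinuousOn G (cyl D) := by
    rw [hGdef]
    exact ((Continuous.continuousOn (by fun_prop)).mul hwM).add
      ((Continuous.continuousOn (by fun_prop)).mul hdZc)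
  have hHc : ContinuousOn H (cyl D) := by
    rw [hHdef]
    exact ((Continuous.continuousOn (by fun_prop)).mul (hwM.pow 2)).add
      ((Continuous.continuousOn (by fun_prop)).mul
        (((continuousOn_const.mul (hwM.pow 1))).mul hdZc))
  have hwabsc : ContinuousOn (fun z => |w z| ^ (p-1)) (cyl D) :=
    hwM.abs.rpow_const (fun z hz => Or.inr (by linarith))
  -- pointwise bounds
  have hb1 : ∀ z ∈ cyl D, |2 - 2*z.2.2| ≤ 2 := by
    intro z hz
    have h2 : z.2.2 ∈ Ioo (0:ℝ) 1 := hz.2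
    exact abs_le.2 ⟨by linarith [h2.2], by linarith [h2.1]⟩
  have hb2 : ∀ z ∈ cyl D, |2*z.2.2 - z.2.2^2| ≤ 1 := by
    intro z hz
    have h2 : z.2.2 ∈ Ioo (0:ℝ) 1 := hz.2
    exact abs_le.2 ⟨by nlinarith [h2.1, h2.2], by nlinarith [h2.1, h2.2]⟩
  have hbPhi : ∀ z ∈ cyl D, |PhiF p (w z)| ≤ C ^ p := by
    intro z hz
    rw [phiF_eq_abs, abs_of_nonneg (Real.rpow_nonneg (abs_nonneg _) _)]
    exact Real.rpow_le_rpow (abs_nonneg _) (hCw z hz) (by linarith)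
  have hbwp1 : ∀ z ∈ cyl D, |w z| ^ (p-1) ≤ C ^ (p-1) := by
    intro z hz
    exact Real.rpow_le_rpow (abs_nonneg _) (hCw z hz) (by linarith)
  have hbS : ∀ z ∈ cyl D, |SFd p (w z)| ≤ 4 * C ^ (p-1) := by
    intro z hz
    rw [sF_abs hp2]
    exact mul_le_mul hp4 (hbwp1 z hz) (Real.rpow_nonneg (abs_nonneg _) _) (by norm_num)
  have hbG : ∀ z ∈ cyl D, |G z| ≤ 6 * C := by
    intro z hz
    have hpabs : |p| ≤ 4 := abs_le.2 ⟨by linarith, hp4⟩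
    simp only [hGdef]
    calc |(2 - 2*z.2.2) * w z + p * (2*z.2.2 - z.2.2^2) * dZ w z|
        ≤ |(2 - 2*z.2.2) * w z| + |p * (2*z.2.2 - z.2.2^2) * dZ w z| := abs_add_le _ _
      _ = |2 - 2*z.2.2| * |w z| + |p| * |2*z.2.2 - z.2.2^2| * |dZ w z| := by
          rw [abs_mul, abs_mul, abs_mul]
      _ ≤ 2 * C + 4 * 1 * C := by
          refine add_le_add (mul_le_mul (hb1 z hz) (hCw z hz) (abs_nonneg _) (by norm_num)) ?_
          exact mul_le_mul (mul_le_mul hpabs (hb2 z hz) (abs_nonneg _) (by norm_num))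
            (hCZ z hz) (abs_nonneg _) (by positivity)
      _ = 6 * C := by ring
  have hbF : ∀ z ∈ cyl D, |F z| ≤ 2 * C^p + 4 * C^(p-1) * C := by
    intro z hz
    simp only [hFdef]
    calc |(2 - 2*z.2.2) * PhiF p (w z) + (2*z.2.2 - z.2.2^2) * (SFd p (w z) * dZ w z)|
        ≤ |(2 - 2*z.2.2) * PhiF p (w z)| + |(2*z.2.2 - z.2.2^2) * (SFd p (w z) * dZ w z)| :=
          abs_add_le _ _
      _ = |2 - 2*z.2.2| * |PhiF p (w z)| + |2*z.2.2 - z.2.2^2| * (|SFd p (w z)| * |dZ w z|) := by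
          rw [abs_mul, abs_mul, abs_mul]
      _ ≤ 2 * C^p + 1 * (4 * C^(p-1) * C) := by
          refine add_le_add (mul_le_mul (hb1 z hz) (hbPhi z hz) (abs_nonneg _) (by norm_num)) ?_
          refine mul_le_mul (hb2 z hz) ?_ (by positivity) (by norm_num)
          exact mul_le_mul (hbS z hz) (hCZ z hz) (abs_nonneg _) (by positivity)
      _ ≤ 2 * C^p + 4 * C^(p-1) * C := by nlinarith [Real.rpow_nonneg hC0 (p-1), hC0]
  have hbH : ∀ z ∈ cyl D, |H z| ≤ 6 * C^2 + 2 * (2*C*C) := by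
    intro z hz
    have hw2 : |(w z)^2| ≤ C^2 := by
      rw [abs_pow]
      exact pow_le_pow_left₀ (abs_nonneg _) (hCw z hz) 2
    have hR : |(2 - 2*z.2.2)*(2 - 2*z.2.2) + (2*z.2.2 - z.2.2^2) * (-2)| ≤ 6 := by
      calc |(2 - 2*z.2.2)*(2 - 2*z.2.2) + (2*z.2.2 - z.2.2^2) * (-2)|
          ≤ |(2 - 2*z.2.2)*(2 - 2*z.2.2)| + |(2*z.2.2 - z.2.2^2) * (-2)| := abs_add_le _ _
        _ = |2 - 2*z.2.2| * |2 - 2*z.2.2| + |2*z.2.2 - z.2.2^2| * 2 := by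
            rw [abs_mul, abs_mul]; norm_num
        _ ≤ 2 * 2 + 1 * 2 := by
            refine add_le_add (mul_le_mul (hb1 z hz) (hb1 z hz) (abs_nonneg _) (by norm_num)) ?_
            exact mul_le_mul_of_nonneg_right (hb2 z hz) (by norm_num)
        _ = 6 := by norm_num
    have hcc : |(2*z.2.2 - z.2.2^2) * (2 - 2*z.2.2)| ≤ 2 := by
      rw [abs_mul]
      calc |2*z.2.2 - z.2.2^2| * |2 - 2*z.2.2| ≤ 1 * 2 :=
            mul_le_mul (hb2 z hz) (hb1 z hz) (abs_nonneg _) (by norm_num)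
        _ = 2 := by norm_num
    have hwd : |2 * w z ^ 1 * dZ w z| ≤ 2*C*C := by
      rw [abs_mul, abs_mul, pow_one, abs_two]
      exact mul_le_mul (mul_le_mul_of_nonneg_left (hCw z hz) (by norm_num)) (hCZ z hz)
        (abs_nonneg _) (by positivity)
    simp only [hHdef]
    calc |((2 - 2*z.2.2)*(2 - 2*z.2.2) + (2*z.2.2 - z.2.2^2) * (-2)) * (w z)^2
        + ((2*z.2.2 - z.2.2^2) * (2 - 2*z.2.2)) * (2 * w z ^ 1 * dZ w z)|
        ≤ |((2 - 2*z.2.2)*(2 - 2*z.2.2) + (2*z.2.2 - z.2.2^2) * (-2)) * (w z)^2|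
        + |((2*z.2.2 - z.2.2^2) * (2 - 2*z.2.2)) * (2 * w z ^ 1 * dZ w z)| := abs_add_le _ _
      _ = |(2 - 2*z.2.2)*(2 - 2*z.2.2) + (2*z.2.2 - z.2.2^2) * (-2)| * |(w z)^2|
        + |(2*z.2.2 - z.2.2^2) * (2 - 2*z.2.2)| * |2 * w z ^ 1 * dZ w z| := by
          rw [abs_mul, abs_mul]
      _ ≤ 6 * C^2 + 2 * (2*C*C) := by
          refine add_le_add (mul_le_mul hR hw2 (abs_nonneg _) (by norm_num)) ?_
          exact mul_le_mul hcc hwd (abs_nonneg _) (by norm_num)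
  -- integrability helper
  have hIntOn : ∀ (f : ℝ×ℝ×ℝ → ℝ), ContinuousOn f (cyl D) → ∀ (B : ℝ),
      (∀ z ∈ cyl D, |f z| ≤ B) → IntegrableOn f (cyl D) := by
    intro f hc B hB
    refine ⟨hc.aestronglyMeasurable hMm,
      HasFiniteIntegral.restrict_of_bounded (C := B) (lt_top_iff_ne_top.2 hfin) ?_⟩
    filter_upwards [ae_restrict_mem hMm] with z hz
    simpa [Real.norm_eq_abs] using hB z hz
  have hIntSlice : ∀ (f : ℝ×ℝ×ℝ → ℝ), ContinuousOn f (cyl D) → ∀ (B : ℝ),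
      (∀ z ∈ cyl D, |f z| ≤ B) → ∀ q : ℝ×ℝ, q ∈ D →
      IntegrableOn (fun t => f (q.1, q.2, t)) (Ioo (0:ℝ) 1) := by
    intro f hc B hB q hq
    have hsc : ContinuousOn (fun t => f (q.1, q.2, t)) (Ioo 0 1) :=
      hc.comp (Continuous.continuousOn (by fun_prop)) (fun t ht => hmemM q hq t ht)
    refine ⟨hsc.aestronglyMeasurable measurableSet_Ioo,
      HasFiniteIntegral.restrict_of_bounded (C := B) ?_ ?_⟩
    · rw [Real.volume_Ioo]
      exact ENNReal.ofReal_lt_top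
    · filter_upwards [ae_restrict_mem measurableSet_Ioo] with t ht
      simpa [Real.norm_eq_abs] using hB _ (hmemM q hq t ht)
  have hFint : IntegrableOn F (cyl D) := hIntOn F hFc _ hbF
  have hHint : IntegrableOn H (cyl D) := hIntOn H hHc _ hbH
  have hfgInt : IntegrableOn (fun z => |w z|^(p-1) * |G z|) (cyl D) := by
    refine hIntOn _ (hwabsc.mul hGc.abs) (C^(p-1) * (6*C)) ?_
    intro z hz
    rw [abs_of_nonneg (mul_nonneg (Real.rpow_nonneg (abs_nonneg _) _) (abs_nonneg _))]
    exact mul_le_mul (hbwp1 z hz) (by simpa using hbG z hz) (abs_nonneg _)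
      (Real.rpow_nonneg hC0 _)
  have hG2int : IntegrableOn (fun z => (G z)^2) (cyl D) := by
    refine hIntOn _ (hGc.pow 2) ((6*C)^2) ?_
    intro z hz
    rw [abs_pow]
    exact pow_le_pow_left₀ (abs_nonneg _) (hbG z hz) 2
  have hW2int : IntegrableOn (fun z => (w z)^2) (cyl D) := by
    refine hIntOn _ (hwM.pow 2) (C^2) ?_
    intro z hz
    rw [abs_pow]
    exact pow_le_pow_left₀ (abs_nonneg _) (hCw z hz) 2
  have hGradInt : IntegrableOn
      (fun z => (dX w z)^2 + (dY w z)^2 + (dZ w z)^2) (cyl D) := by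
    refine hIntOn _ (((hdXc.pow 2).add (hdYc.pow 2)).add (hdZc.pow 2)) (3 * C^2) ?_
    intro z hz
    have h1 : (dX w z)^2 ≤ C^2 := by
      rw [← sq_abs]
      exact pow_le_pow_left₀ (abs_nonneg _) (hCX z hz) 2
    have h2 : (dY w z)^2 ≤ C^2 := by
      rw [← sq_abs]
      exact pow_le_pow_left₀ (abs_nonneg _) (hCY z hz) 2
    have h3 : (dZ w z)^2 ≤ C^2 := by
      rw [← sq_abs]
      exact pow_le_pow_left₀ (abs_nonneg _) (hCZ z hz) 2
    rw [abs_of_nonneg (by positivity)]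
    linarith
  -- Fubini reduction
  have hFub : ∀ f : ℝ×ℝ×ℝ → ℝ, IntegrableOn f (cyl D) →
      ∫ z in cyl D, f z = ∫ q in D, ∫ t in Ioo (0:ℝ) 1, f (q.1, q.2, t) := by
    intro f hf
    have hT : MeasurePreserving
        (MeasurableEquiv.prodAssoc : (ℝ×ℝ)×ℝ ≃ᵐ ℝ×(ℝ×ℝ)) volume volume :=
      volume_preserving_prodAssoc
    have hemb : MeasurableEmbedding
        (MeasurableEquiv.prodAssoc : (ℝ×ℝ)×ℝ ≃ᵐ ℝ×(ℝ×ℝ)) :=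
      (MeasurableEquiv.prodAssoc : (ℝ×ℝ)×ℝ ≃ᵐ ℝ×(ℝ×ℝ)).measurableEmbedding
    have hpre : (MeasurableEquiv.prodAssoc : (ℝ×ℝ)×ℝ ≃ᵐ ℝ×(ℝ×ℝ)) ⁻¹' (cyl D)
        = D ×ˢ Ioo (0:ℝ) 1 := by
      ext ⟨⟨x, y⟩, t⟩
      simp [cyl, MeasurableEquiv.prodAssoc, Equiv.prodAssoc, Set.mem_prod]
    have h1 := hT.setIntegral_preimage_emb hemb f (cyl D)
    rw [← h1, hpre]
    have hint2 : IntegrableOn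
        (fun u : (ℝ×ℝ)×ℝ => f (MeasurableEquiv.prodAssoc u)) (D ×ˢ Ioo (0:ℝ) 1)
        ((volume : Measure (ℝ×ℝ)).prod (volume : Measure ℝ)) := by
      rw [← Measure.volume_eq_prod, ← hpre]
      exact (hT.integrableOn_comp_preimage hemb).2 hf
    rw [Measure.volume_eq_prod, setIntegral_prod _ hint2]
    rfl
  -- the two slice identities
  have key1 : ∀ q : ℝ×ℝ, q ∈ D →
      ∫ t in Ioo (0:ℝ) 1, F (q.1, q.2, t) = PhiF p (w (q.1, q.2, 1)) := by
    intro q hq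
    have hWIcc : ContinuousOn (fun t => w (q.1, q.2, t)) (Icc 0 1) :=
      hwc.comp (Continuous.continuousOn (by fun_prop)) (fun t ht => hsl q hq t ht)
    have h := slice_ftc (f := fun t => (2*t - t^2) * PhiF p (w (q.1, q.2, t)))
      (g := fun t => F (q.1, q.2, t)) ?_ ?_ ?_
    · rw [h]; norm_num
    · exact (Continuous.continuousOn (by fun_prop)).mul (hPhiCont.comp_continuousOn hWIcc)
    · intro t ht
      have hz : ((q.1, q.2, t) : ℝ×ℝ×ℝ) ∈ cyl D := hmemM q hq t ht
      have hWd : HasDerivAt (fun s => w (q.1, q.2, s)) (dZ w (q.1, q.2, t)) t := hZder _ hz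
      have hPhiW : HasDerivAt (fun s => PhiF p (w (q.1, q.2, s)))
          (SFd p (w (q.1, q.2, t)) * dZ w (q.1, q.2, t)) t :=
        (hasDerivAt_phiF hp2 _).comp t hWd
      have hQd : HasDerivAt (fun s : ℝ => 2*s - s^2) (2 - 2*t) t := by
        have h1 := ((hasDerivAt_id t).const_mul (2:ℝ)).fun_sub (hasDerivAt_pow 2 t)
        refine h1.congr_deriv ?_
        push_cast
        ring
      simp only [hFdef]
      exact hQd.mul hPhiW
    · exact hIntSlice F hFc _ hbF q hq
  have key2 : ∀ q : ℝ×ℝ, q ∈ D →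
      ∫ t in Ioo (0:ℝ) 1, H (q.1, q.2, t) = 0 := by
    intro q hq
    have h := slice_ftc
      (f := fun t => ((2*t - t^2) * (2 - 2*t)) * (w (q.1, q.2, t))^2)
      (g := fun t => H (q.1, q.2, t)) ?_ ?_ ?_
    · rw [h]; norm_num
    · have hWIcc : ContinuousOn (fun t => w (q.1, q.2, t)) (Icc 0 1) :=
        hwc.comp (Continuous.continuousOn (by fun_prop)) (fun t ht => hsl q hq t ht)
      exact (Continuous.continuousOn (by fun_prop)).mul (hWIcc.pow 2)
    · intro t ht
      have hz : ((q.1, q.2, t) : ℝ×ℝ×ℝ) ∈ cyl D := hmemM q hq t ht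
      have hWd : HasDerivAt (fun s => w (q.1, q.2, s)) (dZ w (q.1, q.2, t)) t := hZder _ hz
      have hW2 : HasDerivAt (fun s => (w (q.1, q.2, s))^2)
          ((2:ℕ) * (w (q.1, q.2, t))^1 * dZ w (q.1, q.2, t)) t := hWd.pow 2
      have hQd : HasDerivAt (fun s : ℝ => 2*s - s^2) (2 - 2*t) t := by
        have h1 := ((hasDerivAt_id t).const_mul (2:ℝ)).fun_sub (hasDerivAt_pow 2 t)
        refine h1.congr_deriv ?_
        push_cast
        ring
      have hlin : HasDerivAt (fun s : ℝ => 2 - 2*s) (-2) t := by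
        have h1 := (hasDerivAt_const t (2:ℝ)).fun_sub ((hasDerivAt_id t).const_mul (2:ℝ))
        refine h1.congr_deriv ?_
        ring
      have hPd := hQd.fun_mul hlin
      have hfinal := hPd.fun_mul hW2
      simp only [hHdef]
      refine hfinal.congr_deriv ?_
      all_goals (push_cast; ring)
    · exact hIntSlice H hHc _ hbH q hq
  -- Step 1-2: trace integral equals the bulk integral of F
  have step1 : ∫ q in D, |w (q.1, q.2, 1)| ^ p
      = ∫ q in D, ∫ t in Ioo (0:ℝ) 1, F (q.1, q.2, t) := by
    refine setIntegral_congr_fun hD.measurableSet (fun q hq => ?_)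
    rw [← phiF_eq_abs, ← key1 q hq]
  -- Step 3: pointwise bound by the Cauchy-Schwarz integrand
  have step3 : ∫ z in cyl D, F z ≤ ∫ z in cyl D, |w z| ^ (p-1) * |G z| := by
    refine setIntegral_mono_on hFint hfgInt hMm (fun z hz => ?_)
    simp only [hFdef, hGdef]
    have h := ptkey hp2 (w z) (dZ w z) (2 - 2*z.2.2) (2*z.2.2 - z.2.2^2)
    calc (2 - 2*z.2.2) * PhiF p (w z) + (2*z.2.2 - z.2.2^2) * (SFd p (w z) * dZ w z)
        = (2 - 2*z.2.2) * PhiF p (w z) + (2*z.2.2 - z.2.2^2) * SFd p (w z) * dZ w z := by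
          ring
      _ ≤ |w z| ^ (p-1) * |(2 - 2*z.2.2) * w z + p * (2*z.2.2 - z.2.2^2) * dZ w z| := h
  -- Step 4: Cauchy-Schwarz (Hölder with p = q = 2)
  haveI hfinM : IsFiniteMeasure (volume.restrict (cyl D)) :=
    ⟨by rw [Measure.restrict_apply_univ]; exact lt_top_iff_ne_top.2 hfin⟩
  have hconj : Real.HolderConjugate 2 2 := Real.HolderConjugate.two_two
  have hm1 : MemLp (fun z => |w z| ^ (p-1)) (ENNReal.ofReal 2) (volume.restrict (cyl D)) := by
    refine MemLp.of_bound (hwabsc.aestronglyMeasurable hMm) (C^(p-1)) ?_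
    filter_upwards [ae_restrict_mem hMm] with z hz
    rw [Real.norm_eq_abs, abs_of_nonneg (Real.rpow_nonneg (abs_nonneg _) _)]
    exact hbwp1 z hz
  have hm2 : MemLp (fun z => |G z|) (ENNReal.ofReal 2) (volume.restrict (cyl D)) := by
    refine MemLp.of_bound (hGc.abs.aestronglyMeasurable hMm) (6*C) ?_
    filter_upwards [ae_restrict_mem hMm] with z hz
    rw [Real.norm_eq_abs, abs_abs]
    exact hbG z hz
  have step4 : ∫ z in cyl D, |w z| ^ (p-1) * |G z|
      ≤ (∫ z in cyl D, (|w z| ^ (p-1)) ^ (2:ℝ)) ^ ((1:ℝ)/2)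
        * (∫ z in cyl D, |G z| ^ (2:ℝ)) ^ ((1:ℝ)/2) := by
    have h := integral_mul_le_Lp_mul_Lq_of_nonneg hconj
      (Filter.Eventually.of_forall (fun z => Real.rpow_nonneg (abs_nonneg _) _))
      (Filter.Eventually.of_forall (fun z => abs_nonneg _)) hm1 hm2
    simpa using h
  -- identify the two factors
  have eqA : ∫ z in cyl D, (|w z| ^ (p-1)) ^ (2:ℝ) = ∫ z in cyl D, |w z| ^ (2*(p-1)) := by
    refine setIntegral_congr_fun hMm (fun z hz => ?_)
    rw [← Real.rpow_mul (abs_nonneg (w z)), mul_comm (p-1) (2:ℝ)]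
  have eqB : ∫ z in cyl D, |G z| ^ (2:ℝ) = ∫ z in cyl D, (G z)^2 := by
    refine setIntegral_congr_fun hMm (fun z hz => ?_)
    rw [show (2:ℝ) = ((2:ℕ):ℝ) by norm_num, Real.rpow_natCast, sq_abs]
  -- Step 5: the key L² estimate on G
  have hH0 : ∫ z in cyl D, H z = 0 := by
    rw [hFub H hHint]
    have he : ∫ q in D, (∫ t in Ioo (0:ℝ) 1, H (q.1, q.2, t)) = ∫ q in D, (0:ℝ) :=
      setIntegral_congr_fun hD.measurableSet (fun q hq => key2 q hq)
    rw [he, integral_zero]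
  have hsq : ∫ z in cyl D, (G z)^2
      ≤ p^2 * ((∫ z in cyl D, (w z)^2)
          + ∫ z in cyl D, ((dX w z)^2 + (dY w z)^2 + (dZ w z)^2)) := by
    have e1 : ∫ z in cyl D, (G z)^2 = ∫ z in cyl D, ((G z)^2 - p * H z) := by
      rw [integral_sub hG2int (hHint.const_mul p), integral_const_mul, hH0, mul_zero, sub_zero]
    have e2 : ∫ z in cyl D, ((G z)^2 - p * H z)
        ≤ ∫ z in cyl D, p^2 * ((w z)^2 + ((dX w z)^2 + (dY w z)^2 + (dZ w z)^2)) := by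
      refine setIntegral_mono_on (hG2int.sub (hHint.const_mul p))
        ((hW2int.add hGradInt).const_mul _) hMm (fun z hz => ?_)
      have h2 : z.2.2 ∈ Ioo (0:ℝ) 1 := hz.2
      simp only [hGdef, hHdef]
      exact ptkey2 hp2 h2.1 h2.2
    have e3 : ∫ z in cyl D, p^2 * ((w z)^2 + ((dX w z)^2 + (dY w z)^2 + (dZ w z)^2))
        = p^2 * ((∫ z in cyl D, (w z)^2)
          + ∫ z in cyl D, ((dX w z)^2 + (dY w z)^2 + (dZ w z)^2)) := by
      rw [integral_const_mul, integral_add hW2int hGradInt]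
    linarith [e1, e2, e3]
  -- nonnegativity facts for the final assembly
  have hAnn : 0 ≤ ∫ z in cyl D, |w z| ^ (2*(p-1)) :=
    setIntegral_nonneg hMm (fun z hz => Real.rpow_nonneg (abs_nonneg _) _)
  -- final chain
  calc (∫ q in D, |w (q.1, q.2, 1)| ^ p)
      = ∫ z in cyl D, F z := by rw [step1, ← hFub F hFint]
    _ ≤ ∫ z in cyl D, |w z| ^ (p-1) * |G z| := step3
    _ ≤ (∫ z in cyl D, (|w z| ^ (p-1)) ^ (2:ℝ)) ^ ((1:ℝ)/2)
        * (∫ z in cyl D, |G z| ^ (2:ℝ)) ^ ((1:ℝ)/2) := step4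
    _ = (∫ z in cyl D, |w z| ^ (2*(p-1))) ^ ((1:ℝ)/2)
        * Real.sqrt (∫ z in cyl D, (G z)^2) := by
          rw [eqA, eqB, Real.sqrt_eq_rpow]
    _ ≤ (∫ z in cyl D, |w z| ^ (2*(p-1))) ^ ((1:ℝ)/2)
        * (p * Real.sqrt ((∫ z in cyl D, (w z)^2)
            + ∫ z in cyl D, ((dX w z)^2 + (dY w z)^2 + (dZ w z)^2))) := by
          refine mul_le_mul_of_nonneg_left ?_ (Real.rpow_nonneg hAnn _)
          calc Real.sqrt (∫ z in cyl D, (G z)^2)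
              ≤ Real.sqrt (p^2 * ((∫ z in cyl D, (w z)^2)
                + ∫ z in cyl D, ((dX w z)^2 + (dY w z)^2 + (dZ w z)^2))) :=
                Real.sqrt_le_sqrt hsq
            _ = p * Real.sqrt ((∫ z in cyl D, (w z)^2)
                + ∫ z in cyl D, ((dX w z)^2 + (dY w z)^2 + (dZ w z)^2)) := by
                rw [Real.sqrt_mul (sq_nonneg p), Real.sqrt_sq (le_of_lt hp0)]
    _ = p * (∫ z in cyl D, |w z| ^ (2*(p-1))) ^ ((1:ℝ)/2)
        * Real.sqrt ((∫ z in cyl D, (w z)^2)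
            + ∫ z in cyl D, ((dX w z)^2 + (dY w z)^2 + (dZ w z)^2)) := by ring
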